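/- arXiv:2104.04085 — 2 statements merged into one kernel-verified Lean document; each statement's English description precedes it below -/
import Mathlib

section
/- Let V₀, V₁ be positive reals with V₀ < V₁, let C be a real number with C² < V₀V₁, and set D = V₀V₁ - C². Define f₀(z₀,z₁) = exp(-(|z₀|²V₁ + |z₁|²V₀ - 2Re(z₀\bar{z₁})C)/D)/(π²D) and f₁(z₀,z₁) = exp(-(|z₀|²V₀ + |z₁|²V₁ - 2Re(z₀\bar{z₁})C)/D)/(π²D) for z₀, z₁ ∈ ℂ. Then for all z₀, z₁ ∈ ℂ: f₁(z₀,z₁) > f₀(z₀,z₁) if and only if |z₀|² > |z₁|². -/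
open Complex Real

theorem manchester_ML_decision_rule
    (V0 V1 C : ℝ) (hV0 : 0 < V0) (hV01 : V0 < V1) (hC : C ^ 2 < V0 * V1)
    (D : ℝ) (hD : D = V0 * V1 - C ^ 2)
    (f0 f1 : ℂ → ℂ → ℝ)
    (hf0 : ∀ z0 z1 : ℂ, f0 z0 z1 =
      Real.exp (-((‖z0‖ ^ 2 * V1 + ‖z1‖ ^ 2 * V0
        - 2 * (z0 * (starRingEnd ℂ) z1).re * C) / D)) / (Real.pi ^ 2 * D))
    (hf1 : ∀ z0 z1 : ℂ, f1 z0 z1 =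
      Real.exp (-((‖z0‖ ^ 2 * V0 + ‖z1‖ ^ 2 * V1
        - 2 * (z0 * (starRingEnd ℂ) z1).re * C) / D)) / (Real.pi ^ 2 * D)) :
    ∀ z0 z1 : ℂ, f1 z0 z1 > f0 z0 z1 ↔ ‖z0‖ ^ 2 > ‖z1‖ ^ 2 := by
  intro z0 z1
  have hDpos : 0 < D := by rw [hD]; linarith
  have hden : 0 < Real.pi ^ 2 * D := by positivity
  rw [hf0, hf1, gt_iff_lt, div_lt_div_iff_of_pos_right hden, Real.exp_lt_exp,
    neg_lt_neg_iff, div_lt_div_iff_of_pos_right hDpos]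
  constructor
  · intro h; nlinarith
  · intro h; nlinarith
end

section
/- Let M ≥ 2 be an integer and x a real number with sin x ≠ 0. For k = 1, ..., M-1 define the complex numbers a_k = 2 sin(kx) e^{ikx}. Then Σ_{k=1}^{M-1} |a_k|² - (1/M) |Σ_{k=1}^{M-1} a_k|² = M - (1/M)·(sin²(Mx)/sin²x). -/
open Finset Complex

theorem antenna_gain_quadratic_form (M : ℕ) (hM : 2 ≤ M) (x : ℝ) (hx : Real.sin x ≠ 0)
    (a : ℕ → ℂ)
    (ha : ∀ k : ℕ, a k = 2 * (Real.sin (k * x) : ℂ) * Complex.exp (Complex.I * (k * x))) :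
    ∑ k ∈ Finset.Icc 1 (M - 1), ‖a k‖ ^ 2
      - (1 / (M : ℝ)) * ‖∑ k ∈ Finset.Icc 1 (M - 1), a k‖ ^ 2
      = (M : ℝ) - (1 / (M : ℝ)) * (Real.sin ((M : ℝ) * x) ^ 2 / Real.sin x ^ 2) := by
  have hxsq : Real.sin x ^ 2 ≠ 0 := pow_ne_zero _ hx
  have hM2 : (2:ℝ) ≤ (M:ℝ) := by exact_mod_cast hM
  have hMne : (M:ℝ) ≠ 0 := by linarith
  -- a k in rectangular form
  have ha' : ∀ k : ℕ, a k = ((Real.sin (2*k*x) : ℝ) : ℂ)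
      + ((1 - Real.cos (2*k*x) : ℝ) : ℂ) * Complex.I := by
    intro k
    have h1 : Real.sin (2*k*x) = 2 * Real.sin (k*x) * Real.cos (k*x) := by
      rw [show (2*(k:ℝ)*x) = 2*((k:ℝ)*x) by ring, Real.sin_two_mul]
    have h2 : 1 - Real.cos (2*k*x) = 2 * Real.sin (k*x)^2 := by
      rw [show (2*(k:ℝ)*x) = 2*((k:ℝ)*x) by ring, Real.cos_two_mul']
      nlinarith [Real.sin_sq_add_cos_sq ((k:ℝ)*x)]
    rw [ha k, show Complex.I * ((k:ℂ)*(x:ℂ)) = (((k:ℝ)*x : ℝ):ℂ) * Complex.I by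
      push_cast; ring, Complex.exp_mul_I, h1, h2,
      ← Complex.ofReal_cos, ← Complex.ofReal_sin]
    push_cast
    ring
  -- |a k|^2
  have habs : ∀ k : ℕ, ‖a k‖ ^ 2 = 2 - 2 * Real.cos (2*k*x) := by
    intro k
    rw [ha' k, Complex.sq_norm, Complex.normSq_add_mul_I]
    nlinarith [Real.sin_sq_add_cos_sq (2*(k:ℝ)*x)]
  set C : ℝ := ∑ k ∈ Finset.Icc 1 (M-1), Real.cos (2*k*x) with hC
  set S : ℝ := ∑ k ∈ Finset.Icc 1 (M-1), Real.sin (2*k*x) with hS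
  have hcard : ((Finset.Icc 1 (M-1)).card : ℝ) = (M:ℝ) - 1 := by
    rw [Nat.card_Icc]
    have : M - 1 + 1 - 1 = M - 1 := by omega
    rw [this, Nat.cast_sub (by omega)]
    norm_num
  -- sum of |a k|^2
  have h1 : ∑ k ∈ Finset.Icc 1 (M-1), ‖a k‖ ^ 2
      = 2*((M:ℝ)-1) - 2*C := by
    rw [Finset.sum_congr rfl (fun k _ => habs k), Finset.sum_sub_distrib,
      Finset.sum_const, ← Finset.mul_sum, ← hC, nsmul_eq_mul, hcard]
    ring
  -- sum of a k in rectangular form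
  have hsum : ∑ k ∈ Finset.Icc 1 (M-1), a k
      = ((S : ℝ) : ℂ) + (((M:ℝ) - 1 - C : ℝ) : ℂ) * Complex.I := by
    rw [Finset.sum_congr rfl (fun k _ => ha' k), Finset.sum_add_distrib,
      ← Finset.sum_mul]
    congr 1
    · push_cast [hS]; ring
    · congr 1
      have hrr : ∑ k ∈ Finset.Icc 1 (M-1), (1 - Real.cos (2*(k:ℝ)*x)) = (M:ℝ) - 1 - C := by
        rw [Finset.sum_sub_distrib, Finset.sum_const, nsmul_eq_mul, hcard, ← hC]
        ring
      rw [← hrr]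
      push_cast
      rfl
  have h2 : ‖∑ k ∈ Finset.Icc 1 (M-1), a k‖ ^ 2
      = S^2 + ((M:ℝ) - 1 - C)^2 := by
    rw [hsum, Complex.sq_norm, Complex.normSq_add_mul_I]
  -- geometric sum / Dirichlet kernel
  have hr : Complex.exp (2*(x:ℂ)*Complex.I) ≠ 1 := by
    intro h
    have hre : Real.cos (2*x) = 1 := by
      have := congrArg Complex.re h
      rw [show 2*(x:ℂ)*Complex.I = ((2*x : ℝ):ℂ)*Complex.I by push_cast; ring,
        Complex.exp_ofReal_mul_I_re] at this
      simpa using this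
    have : Real.sin x ^ 2 = 0 := by
      nlinarith [Real.cos_two_mul' x, Real.sin_sq_add_cos_sq x]
    exact hxsq this
  have hterm : ∀ k : ℕ, Complex.exp (2*(x:ℂ)*Complex.I) ^ k
      = ((Real.cos (2*k*x) : ℝ) : ℂ) + ((Real.sin (2*k*x) : ℝ):ℂ) * Complex.I := by
    intro k
    rw [← Complex.exp_nat_mul, show (k:ℂ)*(2*(x:ℂ)*Complex.I)
      = ((2*(k:ℝ)*x : ℝ):ℂ)*Complex.I by push_cast; ring, Complex.exp_mul_I,
      ← Complex.ofReal_cos, ← Complex.ofReal_sin]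
  have hrange : Finset.range M = insert 0 (Finset.Icc 1 (M-1)) := by
    ext k
    simp only [Finset.mem_range, Finset.mem_insert, Finset.mem_Icc]
    omega
  have hD : ∑ k ∈ Finset.range M, Complex.exp (2*(x:ℂ)*Complex.I) ^ k
      = (((1 + C : ℝ)):ℂ) + ((S : ℝ):ℂ) * Complex.I := by
    rw [Finset.sum_congr rfl (fun k _ => hterm k), Finset.sum_add_distrib,
      ← Finset.sum_mul, hrange, Finset.sum_insert (by simp),
      Finset.sum_insert (by simp)]
    push_cast [hC, hS]
    simp
  have hgeo : ∑ k ∈ Finset.range M, Complex.exp (2*(x:ℂ)*Complex.I) ^ k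
      = (Complex.exp (2*(x:ℂ)*Complex.I) ^ M - 1) / (Complex.exp (2*(x:ℂ)*Complex.I) - 1) :=
    geom_sum_eq hr M
  have hnum : Complex.normSq (Complex.exp (2*(x:ℂ)*Complex.I) ^ M - 1)
      = 4 * Real.sin ((M:ℝ)*x) ^ 2 := by
    rw [hterm M, show ((Real.cos (2*M*x) : ℝ) : ℂ) + ((Real.sin (2*M*x) : ℝ):ℂ) * Complex.I - 1
      = ((Real.cos (2*M*x) - 1 : ℝ) : ℂ) + ((Real.sin (2*M*x) : ℝ):ℂ) * Complex.I by
        push_cast; ring, Complex.normSq_add_mul_I]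
    have hc2 : Real.cos (2*(M:ℝ)*x) = Real.cos ((M:ℝ)*x)^2 - Real.sin ((M:ℝ)*x)^2 := by
      rw [show (2*(M:ℝ)*x) = 2*((M:ℝ)*x) by ring, Real.cos_two_mul']
    nlinarith [Real.sin_sq_add_cos_sq (2*(M:ℝ)*x), Real.sin_sq_add_cos_sq ((M:ℝ)*x)]
  have hden : Complex.normSq (Complex.exp (2*(x:ℂ)*Complex.I) - 1)
      = 4 * Real.sin x ^ 2 := by
    have := hterm 1
    rw [show Complex.exp (2*(x:ℂ)*Complex.I) = Complex.exp (2*(x:ℂ)*Complex.I)^1 by ring,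
      hterm 1, show ((Real.cos (2*(1:ℕ)*x) : ℝ) : ℂ) + ((Real.sin (2*(1:ℕ)*x) : ℝ):ℂ) * Complex.I - 1
      = ((Real.cos (2*x) - 1 : ℝ) : ℂ) + ((Real.sin (2*x) : ℝ):ℂ) * Complex.I by
        push_cast; ring, Complex.normSq_add_mul_I]
    have hc2 : Real.cos (2*x) = Real.cos x^2 - Real.sin x^2 := Real.cos_two_mul' x
    nlinarith [Real.sin_sq_add_cos_sq (2*x), Real.sin_sq_add_cos_sq x]
  have hkey : (1 + C)^2 + S^2 = Real.sin ((M:ℝ)*x)^2 / Real.sin x ^2 := by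
    have h3 : Complex.normSq ((((1 + C : ℝ)):ℂ) + ((S : ℝ):ℂ) * Complex.I)
        = Complex.normSq ((Complex.exp (2*(x:ℂ)*Complex.I) ^ M - 1)
            / (Complex.exp (2*(x:ℂ)*Complex.I) - 1)) := by
      rw [← hD, hgeo]
    rw [Complex.normSq_add_mul_I, Complex.normSq_div, hnum, hden] at h3
    rw [h3]
    field_simp
  -- final assembly
  rw [h1, h2, ← hkey]
  field_simp
  ring
end
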